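/- arXiv:2304.04667 — 5 statements merged into one kernel-verified Lean document; each statement's English description precedes it below -/
import Mathlib

section
/- Let G = (V, E) be a finite directed graph with node capacities c : V → ℝ≥0, where n = |V|, let s, t ∈ V be distinct, and let f be an st-flow in G. Then there exists an st-flow f' in G of the same value, val(f') = val(f), such that vol(f') ≤ 2n. -/
/-- An `st`-flow in a directed graph `E` on a finite vertex type, with node
capacities `c` : the flow is nonnegative, supported on edges of `E`, and every vertex
`v ∉ {s, t}` satisfies flow conservation `∑ u, f u v = ∑ w, f v w` and the node-capacity
constraint `∑ u, f u v ≤ c v`. -/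
def IsNodeCapFlow {V : Type*} [Fintype V] (E : V → V → Prop) (c : V → NNReal)
    (s t : V) (f : V → V → ℝ) : Prop :=
  (∀ u v : V, 0 ≤ f u v) ∧
  (∀ u v : V, 0 < f u v → E u v) ∧
  (∀ v : V, v ≠ s → v ≠ t →
    (∑ u, f u v) = (∑ w, f v w) ∧ (∑ u, f u v) ≤ (c v : ℝ))

/-- The value of an `st`-flow: total flow leaving `s` minus total flow entering `s`. -/
def flowVal {V : Type*} [Fintype V] (s : V) (f : V → V → ℝ) : ℝ :=
  (∑ w, f s w) - (∑ u, f u s)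

noncomputable section
open Finset
open scoped Classical

variable {V : Type*} [Fintype V]

private def SEfin (h : V → V → ℝ) : Finset (V × V) :=
  Finset.univ.filter (fun p => 0 < h p.1 p.2)

private def SVfin (c : V → NNReal) (s t : V) (h : V → V → ℝ) : Finset V :=
  Finset.univ.filter
    (fun v => v ≠ s ∧ v ≠ t ∧ 0 < (∑ u, h u v) ∧ (∑ u, h u v) < (c v : ℝ))

private lemma exists_kernel (c : V → NNReal) (s t : V) (h : V → V → ℝ)
    (hbig : 2 * Fintype.card V < (SEfin h).card + (SVfin c s t h).card) :
    ∃ (G : V → V → ℝ) (Gs : V → ℝ),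
      (∀ a b, G a b ≠ 0 → (a, b) ∈ SEfin h) ∧
      (∀ v, (∑ u, G u v) = Gs v) ∧
      (∀ v, (∑ w, G v w) = Gs v) ∧
      (∀ v, Gs v ≠ 0 → v ∈ SVfin c s t h) ∧
      ((∃ a b, G a b ≠ 0) ∨ (∃ v, Gs v ≠ 0)) := by
  classical
  set SE := SEfin h with hSE
  set SV := SVfin c s t h with hSV
  -- the incidence matrix of the split graph, restricted to free coordinates
  set M : Matrix (V ⊕ V) (↥SE ⊕ ↥SV) ℝ := fun r i =>
    match r, i with
    | Sum.inl v, Sum.inl e => if (e : V × V).2 = v then 1 else 0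
    | Sum.inl v, Sum.inr w => if (w : V) = v then -1 else 0
    | Sum.inr v, Sum.inl e => if (e : V × V).1 = v then -1 else 0
    | Sum.inr v, Sum.inr w => if (w : V) = v then 1 else 0
    with hM
  have hninj : ¬ Function.Injective M.mulVecLin := by
    intro hinj
    have h1 := LinearMap.finrank_le_finrank_of_injective hinj
    simp only [Module.finrank_fintype_fun_eq_card, Fintype.card_sum,
      Fintype.card_coe] at h1
    omega
  obtain ⟨g1, g2, hg12, hne⟩ := Function.not_injective_iff.mp hninj
  set g : (↥SE ⊕ ↥SV) → ℝ := g1 - g2 with hg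
  have hgker : M.mulVecLin g = 0 := by
    rw [hg, map_sub, hg12, sub_self]
  have hgne : g ≠ 0 := sub_ne_zero.mpr hne
  set Gp : V × V → ℝ := fun p => if hp : p ∈ SE then g (Sum.inl ⟨p, hp⟩) else 0 with hGp
  set Gs : V → ℝ := fun v => if hv : v ∈ SV then g (Sum.inr ⟨v, hv⟩) else 0 with hGs
  have hGpe : ∀ e : ↥SE, Gp e.1 = g (Sum.inl e) := by
    intro e; rw [hGp]; simp only [e.2, dif_pos]
  have hGsv : ∀ w : ↥SV, Gs w.1 = g (Sum.inr w) := by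
    intro w; rw [hGs]; simp only [w.2, dif_pos]
  -- the two kernel equations
  have key1 : ∀ v : V, (∑ u, Gp (u, v)) = Gs v := by
    intro v
    have h0 := congrFun hgker (Sum.inl v)
    rw [Matrix.mulVecLin_apply] at h0
    have h1 : M.mulVec g (Sum.inl v)
        = (∑ e : ↥SE, if (e : V × V).2 = v then g (Sum.inl e) else 0)
          + (∑ w : ↥SV, if (w : V) = v then -(g (Sum.inr w)) else 0) := by
      rw [Matrix.mulVec, dotProduct, Fintype.sum_sum_type]
      congr 1
      · apply Finset.sum_congr rfl; intro x _; rw [hM]; simp [ite_mul]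
      · apply Finset.sum_congr rfl; intro x _; rw [hM]
        by_cases hx : (x : V) = v <;> simp [hx]
    have hC : (∑ w : ↥SV, if (w : V) = v then -(g (Sum.inr w)) else 0)
        = -(∑ w : ↥SV, if (w : V) = v then g (Sum.inr w) else 0) := by
      rw [← Finset.sum_neg_distrib]
      apply Finset.sum_congr rfl; intro x _
      by_cases hx : (x : V) = v <;> simp [hx]
    rw [hC] at h1
    have hA : (∑ e : ↥SE, if (e : V × V).2 = v then g (Sum.inl e) else 0)
        = ∑ u : V, Gp (u, v) := by
      have e1 : (∑ e : ↥SE, if (e : V × V).2 = v then g (Sum.inl e) else 0)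
          = ∑ p ∈ SE, (if p.2 = v then Gp p else 0) := by
        rw [← Finset.sum_coe_sort SE (fun p => if p.2 = v then Gp p else 0)]
        apply Finset.sum_congr rfl; intro e _; rw [hGpe e]
      rw [e1, Finset.sum_subset (Finset.subset_univ SE) (by
        intro p _ hp
        simp only [hGp, dif_neg hp, ite_self])]
      rw [Fintype.sum_prod_type]
      apply Finset.sum_congr rfl; intro a _
      rw [Finset.sum_ite_eq' Finset.univ v (fun b => Gp (a, b)), if_pos (Finset.mem_univ v)]
    have hB : (∑ w : ↥SV, if (w : V) = v then g (Sum.inr w) else 0) = Gs v := by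
      have e1 : (∑ w : ↥SV, if (w : V) = v then g (Sum.inr w) else 0)
          = ∑ x ∈ SV, (if x = v then Gs x else 0) := by
        rw [← Finset.sum_coe_sort SV (fun x => if x = v then Gs x else 0)]
        apply Finset.sum_congr rfl; intro w _; rw [hGsv w]
      rw [e1, Finset.sum_ite_eq' SV v Gs]
      by_cases hv : v ∈ SV
      · rw [if_pos hv]
      · rw [if_neg hv, hGs]; simp only [dif_neg hv]
    rw [h1, hA, hB] at h0
    simp only [Pi.zero_apply] at h0
    linarith
  have key2 : ∀ v : V, (∑ w, Gp (v, w)) = Gs v := by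
    intro v
    have h0 := congrFun hgker (Sum.inr v)
    rw [Matrix.mulVecLin_apply] at h0
    have h1 : M.mulVec g (Sum.inr v)
        = (∑ e : ↥SE, if (e : V × V).1 = v then -(g (Sum.inl e)) else 0)
          + (∑ w : ↥SV, if (w : V) = v then g (Sum.inr w) else 0) := by
      rw [Matrix.mulVec, dotProduct, Fintype.sum_sum_type]
      congr 1
      · apply Finset.sum_congr rfl; intro x _; rw [hM]
        by_cases hx : (x : V × V).1 = v <;> simp [hx]
      · apply Finset.sum_congr rfl; intro x _; rw [hM]; simp [ite_mul]
    have hC : (∑ e : ↥SE, if (e : V × V).1 = v then -(g (Sum.inl e)) else 0)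
        = -(∑ e : ↥SE, if (e : V × V).1 = v then g (Sum.inl e) else 0) := by
      rw [← Finset.sum_neg_distrib]
      apply Finset.sum_congr rfl; intro x _
      by_cases hx : (x : V × V).1 = v <;> simp [hx]
    rw [hC] at h1
    have hA : (∑ e : ↥SE, if (e : V × V).1 = v then g (Sum.inl e) else 0)
        = ∑ w : V, Gp (v, w) := by
      have e1 : (∑ e : ↥SE, if (e : V × V).1 = v then g (Sum.inl e) else 0)
          = ∑ p ∈ SE, (if p.1 = v then Gp p else 0) := by
        rw [← Finset.sum_coe_sort SE (fun p => if p.1 = v then Gp p else 0)]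
        apply Finset.sum_congr rfl; intro e _; rw [hGpe e]
      rw [e1, Finset.sum_subset (Finset.subset_univ SE) (by
        intro p _ hp
        simp only [hGp, dif_neg hp, ite_self])]
      rw [Fintype.sum_prod_type]
      have e2 : ∀ a : V, (∑ b : V, if a = v then Gp (a, b) else 0)
          = if a = v then (∑ b : V, Gp (a, b)) else 0 := by
        intro a; by_cases ha : a = v <;> simp [ha]
      rw [Finset.sum_congr rfl (fun a _ => e2 a),
        Finset.sum_ite_eq' Finset.univ v (fun a => ∑ b : V, Gp (a, b)),
        if_pos (Finset.mem_univ v)]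
    have hB : (∑ w : ↥SV, if (w : V) = v then g (Sum.inr w) else 0) = Gs v := by
      have e1 : (∑ w : ↥SV, if (w : V) = v then g (Sum.inr w) else 0)
          = ∑ x ∈ SV, (if x = v then Gs x else 0) := by
        rw [← Finset.sum_coe_sort SV (fun x => if x = v then Gs x else 0)]
        apply Finset.sum_congr rfl; intro w _; rw [hGsv w]
      rw [e1, Finset.sum_ite_eq' SV v Gs]
      by_cases hv : v ∈ SV
      · rw [if_pos hv]
      · rw [if_neg hv, hGs]; simp only [dif_neg hv]
    rw [h1, hA, hB] at h0
    simp only [Pi.zero_apply] at h0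
    linarith
  refine ⟨fun a b => Gp (a, b), Gs, ?_, ?_, ?_, ?_, ?_⟩
  · intro a b hab
    by_contra hmem
    exact hab (by simp only [hGp, dif_neg hmem])
  · exact key1
  · exact key2
  · intro v hv
    by_contra hmem
    exact hv (by simp only [hGs, dif_neg hmem])
  · obtain ⟨i, hi⟩ := Function.ne_iff.mp hgne
    simp only [Pi.zero_apply] at hi
    cases i with
    | inl e =>
      left
      exact ⟨e.1.1, e.1.2, by simpa [Prod.mk.eta, hGpe e] using hi⟩
    | inr w =>
      right
      exact ⟨w.1, by rw [hGsv w]; exact hi⟩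

private lemma mem_SEfin (h : V → V → ℝ) (p : V × V) :
    p ∈ SEfin h ↔ 0 < h p.1 p.2 := by simp [SEfin]

private lemma mem_SVfin (c : V → NNReal) (s t : V) (h : V → V → ℝ) (v : V) :
    v ∈ SVfin c s t h ↔
      v ≠ s ∧ v ≠ t ∧ 0 < (∑ u, h u v) ∧ (∑ u, h u v) < (c v : ℝ) := by
  simp [SVfin]

private lemma step_lemma (E : V → V → Prop) (c : V → NNReal) (s t : V)
    (h : V → V → ℝ) (hh : IsNodeCapFlow E c s t h)
    (D : V → V → ℝ) (Ds : V → ℝ)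
    (hD1 : ∀ a b, D a b ≠ 0 → (a, b) ∈ SEfin h)
    (hD2 : ∀ v, (∑ u, D u v) = Ds v)
    (hD3 : ∀ v, (∑ w, D v w) = Ds v)
    (hD4 : ∀ v, Ds v ≠ 0 → v ∈ SVfin c s t h)
    (hT : ((((SEfin h).filter (fun p => D p.1 p.2 < 0)).image
            (fun p => h p.1 p.2 / (-D p.1 p.2))) ∪
          ((((SVfin c s t h).filter (fun v => Ds v < 0)).image
            (fun v => (∑ u, h u v) / (-Ds v))) ∪
          (((SVfin c s t h).filter (fun v => 0 < Ds v)).image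
            (fun v => ((c v : ℝ) - ∑ u, h u v) / Ds v)))).Nonempty) :
    ∃ h', IsNodeCapFlow E c s t h' ∧ flowVal s h' = flowVal s h ∧
      (SEfin h').card + (SVfin c s t h').card
        < (SEfin h).card + (SVfin c s t h).card := by
  classical
  set T := ((((SEfin h).filter (fun p => D p.1 p.2 < 0)).image
            (fun p => h p.1 p.2 / (-D p.1 p.2))) ∪
          ((((SVfin c s t h).filter (fun v => Ds v < 0)).image
            (fun v => (∑ u, h u v) / (-Ds v))) ∪
          (((SVfin c s t h).filter (fun v => 0 < Ds v)).image
            (fun v => ((c v : ℝ) - ∑ u, h u v) / Ds v)))) with hTdef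
  set ε := T.min' hT with hε
  -- every element of T is positive
  have hTpos : ∀ x ∈ T, 0 < x := by
    intro x hx
    rw [hTdef] at hx
    simp only [Finset.mem_union, Finset.mem_image, Finset.mem_filter] at hx
    rcases hx with ⟨p, ⟨hpSE, hpD⟩, rfl⟩ | ⟨v, ⟨hvSV, hvD⟩, rfl⟩ | ⟨v, ⟨hvSV, hvD⟩, rfl⟩
    · exact div_pos ((mem_SEfin h p).mp hpSE) (by linarith)
    · exact div_pos ((mem_SVfin c s t h v).mp hvSV).2.2.1 (by linarith)
    · exact div_pos (by linarith [((mem_SVfin c s t h v).mp hvSV).2.2.2]) hvD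
  have hεpos : 0 < ε := hTpos ε (T.min'_mem hT)
  -- the bounds coming from minimality of ε
  have bound1 : ∀ p : V × V, p ∈ SEfin h → D p.1 p.2 < 0 →
      0 ≤ h p.1 p.2 + ε * D p.1 p.2 := by
    intro p hp hD
    have hle : ε ≤ h p.1 p.2 / (-D p.1 p.2) := by
      apply T.min'_le
      rw [hTdef]
      refine Finset.mem_union_left _ (Finset.mem_image.mpr ⟨p, ?_, rfl⟩)
      exact Finset.mem_filter.mpr ⟨hp, hD⟩
    have := (le_div_iff₀ (by linarith : (0:ℝ) < -D p.1 p.2)).mp hle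
    nlinarith
  have bound2 : ∀ v : V, v ∈ SVfin c s t h → Ds v < 0 →
      0 ≤ (∑ u, h u v) + ε * Ds v := by
    intro v hv hD
    have hle : ε ≤ (∑ u, h u v) / (-Ds v) := by
      apply T.min'_le
      rw [hTdef]
      refine Finset.mem_union_right _ (Finset.mem_union_left _
        (Finset.mem_image.mpr ⟨v, Finset.mem_filter.mpr ⟨hv, hD⟩, rfl⟩))
    have := (le_div_iff₀ (by linarith : (0:ℝ) < -Ds v)).mp hle
    nlinarith
  have bound3 : ∀ v : V, v ∈ SVfin c s t h → 0 < Ds v →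
      (∑ u, h u v) + ε * Ds v ≤ (c v : ℝ) := by
    intro v hv hD
    have hle : ε ≤ ((c v : ℝ) - ∑ u, h u v) / Ds v := by
      apply T.min'_le
      rw [hTdef]
      refine Finset.mem_union_right _ (Finset.mem_union_right _
        (Finset.mem_image.mpr ⟨v, Finset.mem_filter.mpr ⟨hv, hD⟩, rfl⟩))
    have := (le_div_iff₀ hD).mp hle
    nlinarith
  set h' : V → V → ℝ := fun a b => h a b + ε * D a b with hh'
  -- support of h' is contained in support of h
  have hsupp : ∀ a b, 0 < h' a b → 0 < h a b := by
    intro a b hab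
    by_contra hpos
    have h0 : h a b = 0 := le_antisymm (not_lt.mp hpos) (hh.1 a b)
    have hD0 : D a b = 0 := by
      by_contra hD0
      have := (mem_SEfin h (a, b)).mp (hD1 a b hD0)
      simp only at this
      linarith
    rw [hh'] at hab
    simp only [h0, hD0, mul_zero, add_zero] at hab
    exact lt_irrefl 0 hab
  -- in-flow and out-flow formulas
  have hin : ∀ v, (∑ u, h' u v) = (∑ u, h u v) + ε * Ds v := by
    intro v
    rw [hh']
    rw [Finset.sum_add_distrib, ← Finset.mul_sum, hD2]
  have hout : ∀ v, (∑ w, h' v w) = (∑ w, h v w) + ε * Ds v := by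
    intro v
    rw [hh']
    rw [Finset.sum_add_distrib, ← Finset.mul_sum, hD3]
  -- h' is nonneg
  have hnn : ∀ a b, 0 ≤ h' a b := by
    intro a b
    rcases lt_trichotomy (D a b) 0 with hD | hD | hD
    · exact bound1 (a, b) (hD1 a b (ne_of_lt hD)) hD
    · rw [hh']; simp only [hD, mul_zero, add_zero]; exact hh.1 a b
    · have h1 : 0 ≤ h a b + ε * D a b := by
        have := hh.1 a b
        nlinarith [mul_pos hεpos hD]
      simpa [hh'] using h1
  -- h' is a flow
  have hflow : IsNodeCapFlow E c s t h' := by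
    refine ⟨hnn, fun a b hab => hh.2.1 a b (hsupp a b hab), fun v hvs hvt => ?_⟩
    constructor
    · rw [hin v, hout v, (hh.2.2 v hvs hvt).1]
    · rw [hin v]
      rcases lt_trichotomy (Ds v) 0 with hD | hD | hD
      · have := (hh.2.2 v hvs hvt).2
        nlinarith
      · simp only [hD, mul_zero, add_zero]
        exact (hh.2.2 v hvs hvt).2
      · exact bound3 v (hD4 v (ne_of_gt hD)) hD
  -- same value
  have hval : flowVal s h' = flowVal s h := by
    unfold flowVal
    rw [hin s, hout s]
    ring
  -- SE h' ⊆ SE h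
  have hSEsub : SEfin h' ⊆ SEfin h := by
    intro p hp
    exact (mem_SEfin h p).mpr (hsupp p.1 p.2 ((mem_SEfin h' p).mp hp))
  -- SV h' ⊆ SV h
  have hSVsub : SVfin c s t h' ⊆ SVfin c s t h := by
    intro v hv
    obtain ⟨hvs, hvt, hv1, hv2⟩ := (mem_SVfin c s t h' v).mp hv
    by_contra hmem
    have hD0 : Ds v = 0 := by
      by_contra hD0; exact hmem (hD4 v hD0)
    rw [hin v, hD0, mul_zero, add_zero] at hv1 hv2
    exact hmem ((mem_SVfin c s t h v).mpr ⟨hvs, hvt, hv1, hv2⟩)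
  -- strict decrease
  have hstrict : (SEfin h').card + (SVfin c s t h').card
      < (SEfin h).card + (SVfin c s t h).card := by
    have hεT : ε ∈ T := T.min'_mem hT
    rw [hTdef] at hεT
    simp only [Finset.mem_union, Finset.mem_image, Finset.mem_filter] at hεT
    rcases hεT with ⟨p, ⟨hpSE, hpD⟩, hpe⟩ | ⟨v, ⟨hvSV, hvD⟩, hve⟩ | ⟨v, ⟨hvSV, hvD⟩, hve⟩
    · -- an edge of the support dies
      have hz : h' p.1 p.2 = 0 := by
        rw [hh']
        have hDne : -D p.1 p.2 ≠ 0 := by linarith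
        rw [← hpe]
        field_simp
        rw [div_self (ne_of_lt hpD)]; ring
      have hpnot : p ∉ SEfin h' := by
        rw [mem_SEfin h' p, hz]; exact lt_irrefl 0
      have : (SEfin h').card < (SEfin h).card :=
        Finset.card_lt_card (Finset.ssubset_iff_of_subset hSEsub |>.mpr ⟨p, hpSE, hpnot⟩)
      have : (SVfin c s t h').card ≤ (SVfin c s t h).card := Finset.card_le_card hSVsub
      omega
    · -- a free vertex becomes empty
      have hz : (∑ u, h' u v) = 0 := by
        rw [hin v, ← hve]
        have hDne : -Ds v ≠ 0 := by linarith
        field_simp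
        rw [div_self (ne_of_lt hvD)]; ring
      have hvnot : v ∉ SVfin c s t h' := by
        rw [mem_SVfin c s t h' v, hz]
        intro hcon
        exact lt_irrefl (0:ℝ) hcon.2.2.1
      have h1 : (SVfin c s t h').card < (SVfin c s t h).card :=
        Finset.card_lt_card (Finset.ssubset_iff_of_subset hSVsub |>.mpr ⟨v, hvSV, hvnot⟩)
      have h2 : (SEfin h').card ≤ (SEfin h).card := Finset.card_le_card hSEsub
      omega
    · -- a free vertex becomes saturated
      have hz : (∑ u, h' u v) = (c v : ℝ) := by
        rw [hin v, ← hve]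
        have hDne : Ds v ≠ 0 := by linarith
        field_simp
        ring
      have hvnot : v ∉ SVfin c s t h' := by
        rw [mem_SVfin c s t h' v, hz]
        intro hcon
        exact lt_irrefl ((c v : ℝ)) hcon.2.2.2
      have h1 : (SVfin c s t h').card < (SVfin c s t h).card :=
        Finset.card_lt_card (Finset.ssubset_iff_of_subset hSVsub |>.mpr ⟨v, hvSV, hvnot⟩)
      have h2 : (SEfin h').card ≤ (SEfin h).card := Finset.card_le_card hSEsub
      omega
  exact ⟨h', hflow, hval, hstrict⟩

private lemma decrease_lemma (E : V → V → Prop) (c : V → NNReal) (s t : V)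
    (h : V → V → ℝ) (hh : IsNodeCapFlow E c s t h)
    (hbig : 2 * Fintype.card V < (SEfin h).card + (SVfin c s t h).card) :
    ∃ h', IsNodeCapFlow E c s t h' ∧ flowVal s h' = flowVal s h ∧
      (SEfin h').card + (SVfin c s t h').card
        < (SEfin h).card + (SVfin c s t h).card := by
  classical
  obtain ⟨G, Gs, hG1, hG2, hG3, hG4, hG5⟩ := exists_kernel c s t h hbig
  -- negated direction also satisfies the hypotheses
  have hG1' : ∀ a b, -G a b ≠ 0 → (a, b) ∈ SEfin h := by
    intro a b hab; exact hG1 a b (by simpa using hab)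
  have hG2' : ∀ v, (∑ u, -G u v) = -Gs v := by
    intro v; rw [Finset.sum_neg_distrib, hG2]
  have hG3' : ∀ v, (∑ w, -G v w) = -Gs v := by
    intro v; rw [Finset.sum_neg_distrib, hG3]
  have hG4' : ∀ v, -Gs v ≠ 0 → v ∈ SVfin c s t h := by
    intro v hv; exact hG4 v (by simpa using hv)
  rcases hG5 with ⟨a, b, hab⟩ | ⟨v, hv⟩
  · have habSE := hG1 a b hab
    rcases lt_or_gt_of_ne hab with hneg | hpos
    · exact step_lemma E c s t h hh G Gs hG1 hG2 hG3 hG4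
        ⟨h a b / (-G a b), Finset.mem_union_left _ (Finset.mem_image.mpr
          ⟨(a, b), Finset.mem_filter.mpr ⟨habSE, hneg⟩, rfl⟩)⟩
    · exact step_lemma E c s t h hh (fun a b => -G a b) (fun v => -Gs v)
        hG1' hG2' hG3' hG4'
        ⟨h a b / (-(-G a b)), Finset.mem_union_left _ (Finset.mem_image.mpr
          ⟨(a, b), Finset.mem_filter.mpr ⟨habSE, by simpa using hpos⟩, rfl⟩)⟩
  · have hvSV := hG4 v hv
    rcases lt_or_gt_of_ne hv with hneg | hpos
    · exact step_lemma E c s t h hh G Gs hG1 hG2 hG3 hG4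
        ⟨(∑ u, h u v) / (-Gs v), Finset.mem_union_right _ (Finset.mem_union_left _
          (Finset.mem_image.mpr ⟨v, Finset.mem_filter.mpr ⟨hvSV, hneg⟩, rfl⟩))⟩
    · exact step_lemma E c s t h hh G Gs hG1 hG2 hG3 hG4
        ⟨((c v : ℝ) - ∑ u, h u v) / Gs v, Finset.mem_union_right _
          (Finset.mem_union_right _
          (Finset.mem_image.mpr ⟨v, Finset.mem_filter.mpr ⟨hvSV, hpos⟩, rfl⟩))⟩

end

/-- Let `G = (V, E)` be a finite directed graph (no self-loops) with node
capacities `c : V → ℝ≥0`, `n = |V|`, `s ≠ t`, and let `f` be an `st`-flow in `G`. Then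
there is an `st`-flow `f'` of the same value with `vol(f') ≤ 2n`. -/
theorem node_capacitated_flow_small_volume {V : Type*} [Fintype V]
    (E : V → V → Prop) (hE : ∀ v : V, ¬ E v v)
    (c : V → NNReal) (s t : V) (hst : s ≠ t)
    (f : V → V → ℝ) (hf : IsNodeCapFlow E c s t f) :
    ∃ f' : V → V → ℝ, IsNodeCapFlow E c s t f' ∧
      flowVal s f' = flowVal s f ∧
      {p : V × V | 0 < f' p.1 p.2}.ncard ≤ 2 * Fintype.card V := by
  classical
  set P : ℕ → Prop := fun m => ∃ h : V → V → ℝ, IsNodeCapFlow E c s t h ∧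
    flowVal s h = flowVal s f ∧
    (SEfin h).card + (SVfin c s t h).card = m with hP
  have hex : ∃ m, P m := ⟨_, f, hf, rfl, rfl⟩
  obtain ⟨h, hh, hval, hcard⟩ := Nat.find_spec hex
  have hle : Nat.find hex ≤ 2 * Fintype.card V := by
    by_contra hlt
    push_neg at hlt
    obtain ⟨h', hh', hval', hlt'⟩ := decrease_lemma E c s t h hh (by omega)
    exact Nat.find_min hex (by omega :
        (SEfin h').card + (SVfin c s t h').card < Nat.find hex)
      ⟨h', hh', by rw [hval', hval], rfl⟩
  refine ⟨h, hh, hval, ?_⟩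
  have hset : {p : V × V | 0 < h p.1 p.2} = ↑(SEfin h) := by
    ext p; simp [SEfin]
  rw [hset, Set.ncard_coe_finset]
  omega
end

section
/- Let G = (V, E) be a finite directed graph with node capacities c : V → ℝ≥0, let s, t ∈ V be distinct, and let f be an st-flow in G. If the support of f (the set of pairs (u,v) ∈ V × V with f(u,v) > 0, viewed as a directed graph) contains an anti-directed cycle, then there exists an st-flow f' in G with val(f') = val(f) whose support is a proper subset of the support of f; in particular vol(f') < vol(f). -/
/-- A directed graph `D` contains an anti-directed cycle: a cyclic sequence
`u₁, …, u_{2ℓ}` with `ℓ ≥ 2` in which every even-indexed vertex is the source of its two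
incident cycle edges (here the even-indexed vertices are `x i` and the odd-indexed
vertices are `y i`, with edges `(x i, y i)` and `(x i, y (i-1))` for all `i : ZMod ℓ`),
where the even-indexed vertices are pairwise distinct and the odd-indexed vertices are
pairwise distinct. -/
def HasAntiDirectedCycle {V : Type*} (D : V → V → Prop) : Prop :=
  ∃ (ℓ : ℕ) (x y : ZMod ℓ → V), 2 ≤ ℓ ∧
    Function.Injective x ∧ Function.Injective y ∧
    ∀ i : ZMod ℓ, D (x i) (y i) ∧ D (x i) (y (i - 1))

section AlternatingShift

variable {V ι : Type*} [DecidableEq V] [Fintype ι]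

def alternatingShift (x y : ι → V) (π : Equiv.Perm ι) (u v : V) : ℝ :=
  ∑ i, ((if u = x i ∧ v = y (π i) then 1 else 0) - (if u = x i ∧ v = y i then 1 else 0))

variable (x y : ι → V) (π : Equiv.Perm ι)

lemma sum_alternatingShift_right [Fintype V] (u : V) : ∑ v, alternatingShift x y π u v = 0 := by
  simp only [alternatingShift, ite_and]
  rw [Finset.sum_comm]
  simp [Finset.sum_sub_distrib]

lemma sum_alternatingShift_left [Fintype V] (v : V) : ∑ u, alternatingShift x y π u v = 0 := by
  simp only [alternatingShift]
  rw [Finset.sum_comm]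
  simp only [Finset.sum_sub_distrib, ite_and, Finset.sum_ite_eq', Finset.mem_univ, if_true]
  exact sub_eq_zero.mpr (Equiv.sum_comp π fun j => if v = y j then (1 : ℝ) else 0)

lemma exists_of_alternatingShift_pos {u v : V} (h : 0 < alternatingShift x y π u v) :
    ∃ i, u = x i ∧ v = y (π i) := by
  by_contra! hne
  refine h.not_ge (Finset.sum_nonpos fun i _ => ?_)
  rw [if_neg fun h => hne i h.1 h.2]
  split_ifs <;> norm_num

lemma exists_of_alternatingShift_neg {u v : V} (h : alternatingShift x y π u v < 0) :
    ∃ i, u = x i ∧ v = y i := by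
  by_contra! hne
  refine h.not_ge (Finset.sum_nonneg fun i _ => ?_)
  have hi : ¬(u = x i ∧ v = y i) := fun h => hne i h.1 h.2
  rw [if_neg hi]
  split_ifs <;> norm_num

variable {x y π}

lemma alternatingShift_apply_self (hx : Function.Injective x) (hy : Function.Injective y)
    (hπ : ∀ i, π i ≠ i) (i : ι) : alternatingShift x y π (x i) (y i) = -1 := by
  rw [alternatingShift, Finset.sum_eq_single i]
  · simp [hy.eq_iff, (hπ i).symm]
  · intro j _ hj
    simp [hx.eq_iff, Ne.symm hj]
  · simp

end AlternatingShift

section FlowRerouting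

variable {V : Type*} [Fintype V] {E : V → V → Prop} {c : V → NNReal} {s t : V}
  {f g : V → V → ℝ}

lemma IsNodeCapFlow.of_sums_eq (hf : IsNodeCapFlow E c s t f) (hg : ∀ u v, 0 ≤ g u v)
    (hsupp : ∀ u v, 0 < g u v → 0 < f u v) (hin : ∀ v, ∑ u, g u v = ∑ u, f u v)
    (hout : ∀ u, ∑ w, g u w = ∑ w, f u w) : IsNodeCapFlow E c s t g := by
  obtain ⟨-, hfE, hfcons⟩ := hf
  refine ⟨hg, fun u v h => hfE u v (hsupp u v h), fun v hs ht => ?_⟩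
  rw [hin, hout]
  exact hfcons v hs ht

lemma flowVal_eq_of_sums_eq (hin : ∑ u, g u s = ∑ u, f u s)
    (hout : ∑ w, g s w = ∑ w, f s w) : flowVal s g = flowVal s f := by
  rw [flowVal, flowVal, hin, hout]

theorem IsNodeCapFlow.exists_ssubset_support_of_alternating {ι : Type*} [Fintype ι]
    [Nonempty ι] (hf : IsNodeCapFlow E c s t f) {x y : ι → V} {π : Equiv.Perm ι}
    (hx : Function.Injective x) (hy : Function.Injective y) (hπ : ∀ i, π i ≠ i)
    (hdown : ∀ i, 0 < f (x i) (y i)) (hup : ∀ i, 0 < f (x i) (y (π i))) :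
    ∃ g, IsNodeCapFlow E c s t g ∧ flowVal s g = flowVal s f ∧
      {p : V × V | 0 < g p.1 p.2} ⊂ {p : V × V | 0 < f p.1 p.2} := by
  classical
  obtain ⟨i₀, -, hi₀⟩ := Finset.exists_min_image Finset.univ (fun i => f (x i) (y i))
    Finset.univ_nonempty
  set ε := f (x i₀) (y i₀)
  set d := alternatingShift x y π
  set g := fun u v => f u v + ε * d u v
  have hin : ∀ v, ∑ u, g u v = ∑ u, f u v := fun v => by
    simp [g, Finset.sum_add_distrib, ← Finset.mul_sum, d, sum_alternatingShift_left]
  have hout : ∀ u, ∑ w, g u w = ∑ w, f u w := fun u => by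
    simp [g, Finset.sum_add_distrib, ← Finset.mul_sum, d, sum_alternatingShift_right]
  have hg_down : ∀ i, g (x i) (y i) = f (x i) (y i) - ε := fun i => by
    simp [g, d, alternatingShift_apply_self hx hy hπ, sub_eq_add_neg]
  have hg : ∀ u v, 0 ≤ g u v := by
    intro u v
    rcases lt_or_ge (d u v) 0 with hneg | hnonneg
    · obtain ⟨i, rfl, rfl⟩ := exists_of_alternatingShift_neg x y π hneg
      rw [hg_down]
      exact sub_nonneg.mpr (hi₀ i (Finset.mem_univ i))
    · exact add_nonneg (hf.1 u v) (mul_nonneg (hdown i₀).le hnonneg)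
  have hsupp : ∀ u v, 0 < g u v → 0 < f u v := by
    intro u v hpos
    rcases lt_or_ge 0 (d u v) with hpos' | hnonpos
    · obtain ⟨i, rfl, rfl⟩ := exists_of_alternatingShift_pos x y π hpos'
      exact hup i
    · exact hpos.trans_le <|
        add_le_of_nonpos_right (mul_nonpos_of_nonneg_of_nonpos (hdown i₀).le hnonpos)
  refine ⟨g, hf.of_sums_eq hg hsupp hin hout, flowVal_eq_of_sums_eq (hin s) (hout s),
    (Set.ssubset_iff_of_subset fun p hp => hsupp p.1 p.2 hp).mpr ⟨(x i₀, y i₀), hdown i₀, ?_⟩⟩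
  simp [hg_down, ε]

end FlowRerouting

theorem anti_directed_cycle_elimination_general {V : Type*} [Fintype V]
    (E : V → V → Prop)
    (c : V → NNReal) (s t : V)
    (f : V → V → ℝ) (hf : IsNodeCapFlow E c s t f)
    (hcycle : HasAntiDirectedCycle (fun u v => 0 < f u v)) :
    ∃ f' : V → V → ℝ, IsNodeCapFlow E c s t f' ∧
      flowVal s f' = flowVal s f ∧
      {p : V × V | 0 < f' p.1 p.2} ⊂ {p : V × V | 0 < f p.1 p.2} ∧
      {p : V × V | 0 < f' p.1 p.2}.ncard < {p : V × V | 0 < f p.1 p.2}.ncard := by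
  obtain ⟨ℓ, x, y, hℓ, hx, hy, hedge⟩ := hcycle
  have : NeZero ℓ := ⟨by omega⟩
  have : Fact (1 < ℓ) := ⟨hℓ⟩
  have hshift : ∀ i : ZMod ℓ, Equiv.subRight 1 i ≠ i := fun i => by simp
  obtain ⟨g, hg, hval, hsupp⟩ := hf.exists_ssubset_support_of_alternating hx hy hshift
    (fun i => (hedge i).1) (fun i => (hedge i).2)
  exact ⟨g, hg, hval, hsupp, Set.ncard_lt_ncard hsupp (Set.toFinite _)⟩

/-- If the support of an `st`-flow `f` in a node-capacitated directed graph
contains an anti-directed cycle, then there is an `st`-flow `f'` of the same value whose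
support is a proper subset of the support of `f`; in particular `vol(f') < vol(f)`. -/
theorem anti_directed_cycle_elimination {V : Type*} [Fintype V]
    (E : V → V → Prop) (hE : ∀ v : V, ¬ E v v)
    (c : V → NNReal) (s t : V) (hst : s ≠ t)
    (f : V → V → ℝ) (hf : IsNodeCapFlow E c s t f)
    (hcycle : HasAntiDirectedCycle (fun u v => 0 < f u v)) :
    ∃ f' : V → V → ℝ, IsNodeCapFlow E c s t f' ∧
      flowVal s f' = flowVal s f ∧
      {p : V × V | 0 < f' p.1 p.2} ⊂ {p : V × V | 0 < f p.1 p.2} ∧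
      {p : V × V | 0 < f' p.1 p.2}.ncard < {p : V × V | 0 < f p.1 p.2}.ncard :=
  anti_directed_cycle_elimination_general E c s t f hf hcycle
end

section
/- Let D be a finite directed graph on n vertices (with no self-loops). If D contains no anti-directed cycle, then D has at most 2n edges. -/
/-!
If some edge is the only edge leaving its source, or the only edge entering its sink, delete it:
this lowers the number of sources plus the number of sinks by at least one, so by induction the
number of edges is at most `#sources + #sinks ≤ 2n`. Otherwise every edge has a sibling at both
ends, and a greedy walk `x 0 → y 0 ← x 1 → y 1 ← ⋯` that never steps straight back must repeat a
vertex; the stretch between the first repetition and its earlier occurrence is an anti-directed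
cycle.
-/

section

open Finset

lemma ZMod.val_sub_one_add_one {n : ℕ} [NeZero n] (hn : n ≠ 1) {k : ZMod n} (hk : k ≠ 0) :
    (k - 1).val + 1 = k.val := by
  have hk1 : (1 : ZMod n).val ≤ k.val := by
    rw [ZMod.val_one'' hn]
    exact Nat.one_le_iff_ne_zero.mpr ((ZMod.val_ne_zero k).mpr hk)
  rw [ZMod.val_sub hk1, ZMod.val_one'' hn]
  exact Nat.sub_add_cancel (by rwa [ZMod.val_one'' hn] at hk1)

lemma Set.InjOn.comp_add_left {α : Type*} {f : ℕ → α} {i ℓ j : ℕ} (hf : Set.InjOn f (Set.Iio j))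
    (h : i + ℓ ≤ j) : Set.InjOn (fun n => f (i + n)) (Set.Iio ℓ) :=
  hf.comp (add_right_injective i).injOn fun n (hn : n < ℓ) => show i + n < j by omega

theorem Finset.card_image_erase_lt {α β : Type*} [DecidableEq α] [DecidableEq β] {f : α → β}
    {s : Finset α} {a : α} (ha : a ∈ s) (hfiber : ∀ x ∈ s, f x = f a → x = a) :
    #((s.erase a).image f) < #(s.image f) := by
  refine card_lt_card ⟨image_subset_image (erase_subset a s), fun h => ?_⟩
  obtain ⟨x, hx, hxa⟩ := mem_image.mp (h (mem_image_of_mem f ha))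
  exact ne_of_mem_erase hx (hfiber x (mem_of_mem_erase hx) hxa)

namespace HasAntiDirectedCycle

variable {V : Type*} {D : V → V → Prop}

theorem mono {D' : V → V → Prop} (hD : ∀ a b, D a b → D' a b) (h : HasAntiDirectedCycle D) :
    HasAntiDirectedCycle D' :=
  let ⟨ℓ, x, y, hℓ, hx, hy, hxy⟩ := h
  ⟨ℓ, x, y, hℓ, hx, hy, fun i => ⟨hD _ _ (hxy i).1, hD _ _ (hxy i).2⟩⟩

/-- The cycle `x 0 → y 0 ← x 1 → ⋯ ← x (ℓ - 1) → y (ℓ - 1) ← x 0`. -/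
theorem of_closed_walk {ℓ : ℕ} (hℓ : 2 ≤ ℓ) {x y : ℕ → V}
    (hx : Set.InjOn x (Set.Iio ℓ)) (hy : Set.InjOn y (Set.Iio ℓ))
    (hxy : ∀ n < ℓ, D (x n) (y n)) (hyx : ∀ n < ℓ - 1, D (x (n + 1)) (y n))
    (hclose : D (x 0) (y (ℓ - 1))) : HasAntiDirectedCycle D := by
  obtain ⟨m, rfl⟩ : ∃ m, ℓ = m + 2 := ⟨ℓ - 2, by omega⟩
  refine ⟨m + 2, fun k => x k.val, fun k => y k.val, hℓ, ?_, ?_, fun k => ⟨hxy _ k.val_lt, ?_⟩⟩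
  · exact fun a b h => ZMod.val_injective _ (hx a.val_lt b.val_lt h)
  · exact fun a b h => ZMod.val_injective _ (hy a.val_lt b.val_lt h)
  obtain rfl | hk := eq_or_ne k 0
  · simpa [ZMod.val_neg_one] using hclose
  · have hval := ZMod.val_sub_one_add_one (by omega) hk
    simpa only [hval] using hyx (k - 1).val (by have := k.val_lt; omega)

end HasAntiDirectedCycle

variable {V : Type*} {D : V → V → Prop}

structure IsNonBacktrackingAntiWalk (D : V → V → Prop) (x y : ℕ → V) : Prop where
  forward : ∀ n, D (x n) (y n)
  backward : ∀ n, D (x (n + 1)) (y n)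
  source_ne : ∀ n, x (n + 1) ≠ x n
  sink_ne : ∀ n, y (n + 1) ≠ y n

theorem IsNonBacktrackingAntiWalk.hasAntiDirectedCycle [Finite V] {x y : ℕ → V}
    (hw : IsNonBacktrackingAntiWalk D x y) : HasAntiDirectedCycle D := by
  classical
  have hex : ∃ j, ∃ i < j, x i = x j ∨ y i = y j := by
    obtain ⟨i, j, hne, heq⟩ := Finite.exists_ne_map_eq_of_infinite y
    rcases hne.lt_or_gt with h | h
    exacts [⟨j, i, h, .inr heq⟩, ⟨i, j, h, .inr heq.symm⟩]
  obtain ⟨j, ⟨i, hij, hcol⟩, hmin⟩ : ∃ j, (∃ i < j, x i = x j ∨ y i = y j) ∧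
      ∀ m < j, ¬ ∃ i < m, x i = x m ∨ y i = y m :=
    ⟨Nat.find hex, Nat.find_spec hex, fun _ => Nat.find_min hex⟩
  have hinj {f : ℕ → V} (hf : ∀ a b, a < b → f a = f b → ∃ i < b, x i = x b ∨ y i = y b) :
      Set.InjOn f (Set.Iio j) := by
    intro a (ha : a < j) b (hb : b < j) hab
    by_contra hne
    rcases Nat.lt_or_gt_of_ne hne with h | h
    · exact hmin b hb (hf a b h hab)
    · exact hmin a ha (hf b a h hab.symm)
  have hx : Set.InjOn x (Set.Iio j) := hinj fun a _ h hab => ⟨a, h, .inl hab⟩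
  have hy : Set.InjOn y (Set.Iio j) := hinj fun a _ h hab => ⟨a, h, .inr hab⟩
  by_cases hxcol : ∃ i < j, x i = x j
  · -- the cycle `x i, y i, …, y (j - 1)` closes at `x j = x i`
    obtain ⟨i, hij, hxij⟩ := hxcol
    have hlen : i + 1 ≠ j := fun h => hw.source_ne i (h ▸ hxij.symm)
    refine HasAntiDirectedCycle.of_closed_walk (ℓ := j - i) (by omega)
      (hx.comp_add_left (i := i) (ℓ := j - i) (by omega))
      (hy.comp_add_left (i := i) (ℓ := j - i) (by omega))
      (fun _ _ => hw.forward _) (fun _ _ => hw.backward _) ?_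
    rw [add_zero, hxij, show i + (j - i - 1) = j - 1 by omega]
    simpa [show j - 1 + 1 = j by omega] using hw.backward (j - 1)
  · -- the cycle `x (i + 1), y (i + 1), …, x j, y j` closes at `y j = y i`
    have hyij : y i = y j := hcol.resolve_left fun h => hxcol ⟨i, hij, h⟩
    have hx' : Set.InjOn x (Set.Iio (j + 1)) := by
      intro a (ha : a < j + 1) b (hb : b < j + 1) hab
      rcases (Nat.lt_succ_iff.mp ha).lt_or_eq with ha | rfl <;>
        rcases (Nat.lt_succ_iff.mp hb).lt_or_eq with hb | rfl
      · exact hx ha hb hab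
      · exact absurd ⟨a, ha, hab⟩ hxcol
      · exact absurd ⟨b, hb, hab.symm⟩ hxcol
      · rfl
    have hlen : i + 1 ≠ j := fun h => hw.sink_ne i (h ▸ hyij.symm)
    refine HasAntiDirectedCycle.of_closed_walk (ℓ := j - i) (by omega)
      (hx'.comp_add_left (i := i + 1) (ℓ := j - i) (by omega)) ?_
      (fun _ _ => hw.forward _) (fun _ _ => hw.backward _) ?_
    · intro a (ha : a < j - i) b (hb : b < j - i) (hab : y (i + 1 + a) = y (i + 1 + b))
      have hlast : ∀ n < j - i, i + 1 + n < j ∨ i + 1 + n = j := fun n hn => by omega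
      rcases hlast a ha with ha | ha <;> rcases hlast b hb with hb | hb
      · have := hy ha hb hab; omega
      · have := hy ha hij (hab.trans (hb ▸ hyij.symm)); omega
      · have := hy hij hb ((ha ▸ hyij).trans hab); omega
      · omega
    · rw [add_zero, show i + 1 + (j - i - 1) = j by omega, ← hyij]
      exact hw.backward i

/-- Walk greedily: from the edge `a → b`, leave `b` backwards along another edge `a' → b`, then
leave `a'` forwards along an edge `a' → b'` other than `a' → b`. -/
theorem exists_isNonBacktrackingAntiWalk {a b : V} (hab : D a b)
    (hsrc : ∀ a b, D a b → ∃ b', D a b' ∧ b' ≠ b) (hsnk : ∀ a b, D a b → ∃ a', D a' b ∧ a' ≠ a) :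
    ∃ x y, IsNonBacktrackingAntiWalk D x y := by
  have hstep : ∀ e : {e : V × V // D e.1 e.2}, ∃ e' : {e : V × V // D e.1 e.2},
      D e'.1.1 e.1.2 ∧ e'.1.1 ≠ e.1.1 ∧ e'.1.2 ≠ e.1.2 := by
    rintro ⟨⟨a, b⟩, hab⟩
    obtain ⟨a', ha'b, ha'⟩ := hsnk a b hab
    obtain ⟨b', ha'b', hb'⟩ := hsrc a' b ha'b
    exact ⟨⟨(a', b'), ha'b'⟩, ha'b, ha', hb'⟩
  choose step hstep using hstep
  let e (n : ℕ) := step^[n] ⟨(a, b), hab⟩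
  have he (n : ℕ) : e (n + 1) = step (e n) := Function.iterate_succ_apply' ..
  refine ⟨fun n => (e n).1.1, fun n => (e n).1.2, fun n => (e n).2, fun n => ?_, fun n => ?_,
    fun n => ?_⟩ <;> rw [he]
  exacts [(hstep _).1, (hstep _).2.1, (hstep _).2.2]

theorem exists_leaf_of_not_hasAntiDirectedCycle [Finite V] (hD : ¬ HasAntiDirectedCycle D)
    {a b : V} (hab : D a b) :
    ∃ a b, D a b ∧ ((∀ b', D a b' → b' = b) ∨ ∀ a', D a' b → a' = a) := by
  by_contra! h
  obtain ⟨x, y, hw⟩ := exists_isNonBacktrackingAntiWalk hab (fun a b hab => (h a b hab).1)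
    (fun a b hab => (h a b hab).2)
  exact hD hw.hasAntiDirectedCycle

theorem card_le_card_image_fst_add_card_image_snd [Finite V] [DecidableEq V]
    (E : Finset (V × V)) (hE : ¬ HasAntiDirectedCycle fun a b => (a, b) ∈ E) :
    #E ≤ #(E.image Prod.fst) + #(E.image Prod.snd) := by
  induction E using Finset.strongInduction with
  | H E ih =>
  obtain rfl | ⟨⟨a, b⟩, hab⟩ := E.eq_empty_or_nonempty
  · simp
  obtain ⟨a, b, hab, hleaf⟩ := exists_leaf_of_not_hasAntiDirectedCycle hE hab
  have ih := ih (E.erase (a, b)) (erase_ssubset hab)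
    (fun h => hE (h.mono fun _ _ h => mem_of_mem_erase h))
  have hcard := card_erase_add_one hab
  have hle (f : V × V → V) : #((E.erase (a, b)).image f) ≤ #(E.image f) :=
    card_le_card (image_subset_image (erase_subset _ _))
  rcases hleaf with hleaf | hleaf
  · have := card_image_erase_lt (f := Prod.fst) hab fun ⟨_, b'⟩ he (h : _ = a) => by
      subst h; rw [hleaf b' he]
    have := hle Prod.snd
    omega
  · have := card_image_erase_lt (f := Prod.snd) hab fun ⟨a', _⟩ he (h : _ = b) => by
      subst h; rw [hleaf a' he]
    have := hle Prod.fst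
    omega

end

theorem no_anti_directed_cycle_few_edges_general {V : Type*} [Fintype V]
    (D : V → V → Prop)
    (hnoc : ¬ HasAntiDirectedCycle D) :
    {p : V × V | D p.1 p.2}.ncard ≤ 2 * Fintype.card V := by
  classical
  let E := Finset.univ.filter fun p : V × V => D p.1 p.2
  have hE : {p : V × V | D p.1 p.2} = E := by ext; simp [E]
  rw [hE, Set.ncard_coe_finset, two_mul]
  calc E.card ≤ (E.image Prod.fst).card + (E.image Prod.snd).card :=
        card_le_card_image_fst_add_card_image_snd E
          fun h => hnoc (h.mono fun _ _ h => by simpa [E] using h)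
    _ ≤ Fintype.card V + Fintype.card V :=
        add_le_add (Finset.card_le_univ _) (Finset.card_le_univ _)

/-- A finite directed graph on `n` vertices with no self-loops and no
anti-directed cycle has at most `2n` edges. -/
theorem no_anti_directed_cycle_few_edges {V : Type*} [Fintype V]
    (D : V → V → Prop) (hD : ∀ v : V, ¬ D v v)
    (hnoc : ¬ HasAntiDirectedCycle D) :
    {p : V × V | D p.1 p.2}.ncard ≤ 2 * Fintype.card V :=
  no_anti_directed_cycle_few_edges_general D hnoc
end

section
/- Let G be a finite simple undirected graph and let p, u, v be distinct vertices that are pairwise non-adjacent. If there exists a minimum uv-separator C (i.e., a uv-separator with |C| = κ(u,v)) such that p ∉ C, then κ(u,v) ≥ min(κ(p,u), κ(p,v)). -/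
/-- `C` is an `xy`-separator in the simple graph `G`: `x ∉ C`, `y ∉ C`, and every walk in
`G` from `x` to `y` passes through a vertex of `C`. -/
def IsSeparator {V : Type*} (G : SimpleGraph V) (x y : V) (C : Set V) : Prop :=
  x ∉ C ∧ y ∉ C ∧ ∀ w : G.Walk x y, ∃ c ∈ C, c ∈ w.support

/-- For non-adjacent distinct vertices `x, y`, the vertex connectivity `κ(x,y)`: the
minimum cardinality of an `xy`-separator. -/
noncomputable def vertexConn {V : Type*} (G : SimpleGraph V) (x y : V) : ℕ :=
  sInf {n : ℕ | ∃ C : Set V, IsSeparator G x y C ∧ C.ncard = n}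

/-!
A minimum `uv`-separator `C` avoiding `p` separates `p` from `u` or from `v`: if walks
`p → u` and `p → v` both avoided `C`, joining them would give a `u → v` walk avoiding `C`.
Hence `C` is a `pu`- or a `pv`-separator of size `κ(u,v)`.
-/

namespace IsSeparator

variable {V : Type*} {G : SimpleGraph V} {x y z : V} {C : Set V}

theorem vertexConn_le_ncard (h : IsSeparator G x y C) : vertexConn G x y ≤ C.ncard :=
  Nat.sInf_le ⟨C, h, rfl⟩

theorem left_or_right (h : IsSeparator G x y C) (hz : z ∉ C) :
    IsSeparator G z x C ∨ IsSeparator G z y C := by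
  obtain ⟨hx, hy, hsep⟩ := h
  by_cases hzx : ∀ w : G.Walk z x, ∃ c ∈ C, c ∈ w.support
  · exact .inl ⟨hz, hx, hzx⟩
  push Not at hzx
  obtain ⟨w₁, hw₁⟩ := hzx
  refine .inr ⟨hz, hy, fun w₂ => ?_⟩
  obtain ⟨c, hcC, hc⟩ := hsep (w₁.reverse.append w₂)
  rw [SimpleGraph.Walk.mem_support_append_iff, SimpleGraph.Walk.support_reverse,
    List.mem_reverse] at hc
  exact ⟨c, hcC, hc.resolve_left (hw₁ c hcC)⟩

end IsSeparator

theorem triangle_inequality_vertex_connectivity_general {V : Type*}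
    (G : SimpleGraph V) (p u v : V)
    (hmin : ∃ C : Set V, IsSeparator G u v C ∧ C.ncard = vertexConn G u v ∧ p ∉ C) :
    min (vertexConn G p u) (vertexConn G p v) ≤ vertexConn G u v := by
  obtain ⟨C, hC, hcard, hpC⟩ := hmin
  rw [← hcard]
  rcases hC.left_or_right hpC with hpu | hpv
  · exact min_le_of_left_le hpu.vertexConn_le_ncard
  · exact min_le_of_right_le hpv.vertexConn_le_ncard

/-- Let `p, u, v` be distinct, pairwise non-adjacent vertices of a finite
simple graph `G`. If some minimum `uv`-separator avoids `p`, then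
`κ(u,v) ≥ min (κ(p,u), κ(p,v))`. -/
theorem triangle_inequality_vertex_connectivity {V : Type*} [Fintype V]
    (G : SimpleGraph V) (p u v : V)
    (hpu : p ≠ u) (hpv : p ≠ v) (huv : u ≠ v)
    (hapu : ¬ G.Adj p u) (hapv : ¬ G.Adj p v) (hauv : ¬ G.Adj u v)
    (hmin : ∃ C : Set V, IsSeparator G u v C ∧ C.ncard = vertexConn G u v ∧ p ∉ C) :
    min (vertexConn G p u) (vertexConn G p v) ≤ vertexConn G u v :=
  triangle_inequality_vertex_connectivity_general G p u v hmin
end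

section
/- Let G be a finite simple undirected graph and let p, u, v be distinct vertices that are pairwise non-adjacent. Suppose that κ(p,u) < κ(p,v), that there exists a minimum pu-separator C (i.e., |C| = κ(p,u)) with v ∉ C, and that there exists a minimum uv-separator not containing p. Then κ(u,v) = κ(p,u). -/
/-!
A minimum `pu`-separator `C` avoiding `v` cannot separate `p` from `v`, since it is smaller than
`κ(p,v)`; as every `u`–`v` walk avoiding `C` would extend a `p`–`v` walk avoiding `C` to a
`p`–`u` one, `C` separates `u` from `v`, so `κ(u,v) ≤ κ(p,u)`. Symmetrically a minimum
`uv`-separator `D` avoiding `p` has `|D| ≤ κ(p,u) < κ(p,v)`, so it separates `u` from `p`,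
giving `κ(p,u) ≤ κ(u,v)`.
-/

section

variable {V : Type*} {G : SimpleGraph V} {x y z : V} {C : Set V}

lemma vertexConn_le_ncard (h : IsSeparator G x y C) : vertexConn G x y ≤ C.ncard :=
  Nat.sInf_le ⟨C, h, rfl⟩

lemma IsSeparator.symm (h : IsSeparator G x y C) : IsSeparator G y x C :=
  ⟨h.2.1, h.1, fun w => by simpa using h.2.2 w.reverse⟩

lemma IsSeparator.or_of_notMem (h : IsSeparator G x y C) (hz : z ∉ C) :
    IsSeparator G x z C ∨ IsSeparator G z y C := by
  obtain ⟨hx, hy, hsep⟩ := h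
  rw [or_iff_not_imp_left]
  intro hxz
  refine ⟨hz, hy, fun w₂ => ?_⟩
  by_contra! hw₂
  refine hxz ⟨hx, hz, fun w₁ => ?_⟩
  obtain ⟨c, hc, hmem⟩ := hsep (w₁.append w₂)
  rw [SimpleGraph.Walk.mem_support_append_iff] at hmem
  exact ⟨c, hc, hmem.resolve_right (hw₂ c hc)⟩

end

theorem maxflow_determined_strict_general {V : Type*}
    (G : SimpleGraph V) (p u v : V)
    (hlt : vertexConn G p u < vertexConn G p v)
    (hCpu : ∃ C : Set V, IsSeparator G p u C ∧ C.ncard = vertexConn G p u ∧ v ∉ C)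
    (hCuv : ∃ C : Set V, IsSeparator G u v C ∧ C.ncard = vertexConn G u v ∧ p ∉ C) :
    vertexConn G u v = vertexConn G p u := by
  obtain ⟨C, hC, hCcard, hvC⟩ := hCpu
  obtain ⟨D, hD, hDcard, hpD⟩ := hCuv
  have hCvu : IsSeparator G v u C := (hC.or_of_notMem hvC).resolve_left fun hpv =>
    (vertexConn_le_ncard hpv).not_gt (hCcard ▸ hlt)
  have hle : vertexConn G u v ≤ vertexConn G p u := hCcard ▸ vertexConn_le_ncard hCvu.symm
  have hDup : IsSeparator G u p D := (hD.or_of_notMem hpD).resolve_right fun hpv =>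
    (vertexConn_le_ncard hpv).not_gt (by omega)
  exact le_antisymm hle (hDcard ▸ vertexConn_le_ncard hDup.symm)

/-- Let `p, u, v` be distinct, pairwise non-adjacent vertices of a finite
simple graph `G`. Suppose `κ(p,u) < κ(p,v)`, some minimum `pu`-separator avoids `v`, and
some minimum `uv`-separator avoids `p`. Then `κ(u,v) = κ(p,u)`. -/
theorem maxflow_determined_strict {V : Type*} [Fintype V]
    (G : SimpleGraph V) (p u v : V)
    (hpu : p ≠ u) (hpv : p ≠ v) (huv : u ≠ v)
    (hapu : ¬ G.Adj p u) (hapv : ¬ G.Adj p v) (hauv : ¬ G.Adj u v)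
    (hlt : vertexConn G p u < vertexConn G p v)
    (hCpu : ∃ C : Set V, IsSeparator G p u C ∧ C.ncard = vertexConn G p u ∧ v ∉ C)
    (hCuv : ∃ C : Set V, IsSeparator G u v C ∧ C.ncard = vertexConn G u v ∧ p ∉ C) :
    vertexConn G u v = vertexConn G p u :=
  maxflow_determined_strict_general G p u v hlt hCpu hCuv
end
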